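/- arXiv:1603.02133 — 2 statements merged into one kernel-verified Lean document; each statement's English description precedes it below -/
import Mathlib

section
/- For a finite set X, the canonical evaluation map ℓ∞(X) → ℓ∞(Char(ℓ∞(X))), sending f to the function φ ↦ φ(f), is a *-algebra isomorphism. (The counit of the adjunction nsp ⊣ ℓ∞ is an isomorphism.) -/
/-!
Every character of `X → ℂ` is evaluation at a point of `X`: it is determined by the images of the
indicator functions of points, which are idempotents summing to `1`, so exactly one of them is sent
to `1` (`AlgHom.eq_piEvalAlgHom`). Hence `F ↦ (x ↦ F (ev x))` inverts the evaluation map.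
-/

namespace StarAlgHom

section EvalCharacters

variable (R A B : Type*) [CommSemiring R] [Semiring A] [Algebra R A] [Star A]
  [Semiring B] [Algebra R B] [Star B]

def evalCharacters : A →⋆ₐ[R] ((A →⋆ₐ[R] B) → B) where
  toFun a φ := φ a
  map_one' := funext fun φ => map_one φ
  map_mul' a b := funext fun φ => map_mul φ a b
  map_zero' := funext fun φ => map_zero φ
  map_add' a b := funext fun φ => map_add φ a b
  commutes' r := funext fun φ => AlgHomClass.commutes φ r
  map_star' a := funext fun φ => map_star φ a

end EvalCharacters

variable {k G : Type*} [CommSemiring k] [NoZeroDivisors k] [Nontrivial k] [Star k] [Finite G]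

theorem eq_piEvalStarAlgHom (φ : (G → k) →⋆ₐ[k] k) :
    ∃ s : G, φ = Pi.evalStarAlgHom k (fun _ => k) s := by
  obtain ⟨s, hs⟩ := AlgHom.eq_piEvalAlgHom φ.toAlgHom
  exact ⟨s, StarAlgHom.ext fun f => DFunLike.congr_fun hs f⟩

theorem evalCharacters_bijective_pi : Function.Bijective (evalCharacters k (G → k) k) := by
  refine Function.bijective_iff_has_inverse.mpr
    ⟨fun F s => F (Pi.evalStarAlgHom k (fun _ => k) s), fun f => rfl, fun F => ?_⟩
  funext φ
  obtain ⟨s, rfl⟩ := eq_piEvalStarAlgHom φ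
  rfl

end StarAlgHom

/-- For a finite set `X`, the evaluation map `ℓ∞(X) → ℓ∞(Char(ℓ∞(X)))`,
`f ↦ (φ ↦ φ f)`, is a *-algebra isomorphism. -/
theorem counit_iso (X : Type*) [Fintype X] :
    ∃ e : (X → ℂ) ≃⋆ₐ[ℂ] (((X → ℂ) →⋆ₐ[ℂ] ℂ) → ℂ),
      ∀ (f : X → ℂ) (φ : (X → ℂ) →⋆ₐ[ℂ] ℂ), e f φ = φ f :=
  ⟨StarAlgEquiv.ofBijective _ StarAlgHom.evalCharacters_bijective_pi, fun _ _ => rfl⟩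
end

section
/- For n ≥ 2, the matrix algebra Mₙ(ℂ) admits no duplicator: there is no positive unital linear map μ : Mₙ(ℂ) ⊗ Mₙ(ℂ) → Mₙ(ℂ) with μ(1 ⊗ a) = a = μ(a ⊗ 1) for all a and μ(a ⊗ μ(b ⊗ c)) = μ(μ(a ⊗ b) ⊗ c) for all a, b, c. -/
/-!
Let `μ` be positive with `μ(1 ⊗ a) = a = μ(a ⊗ 1)`. For projections `P`, `Q` the positivity of
`μ(P ⊗ (1 - Q))` and `μ((1 - P) ⊗ Q)` squeezes `0 ≤ μ(P ⊗ Q) ≤ P, Q`; hence `μ(P ⊗ Q) = 0` when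
`PQ = 0`, and `μ(P ⊗ P) = P`. Applied to the projections onto `e_i ± c e_j` with `|c| = 1`, and
polarising with `c = 1` and `c = I`, this gives `μ(E_ij ⊗ E_ji + E_ji ⊗ E_ij) = E_ii + E_jj`,
while `μ(E_ii ⊗ E_jj) = μ(E_jj ⊗ E_ii) = 0`. So `μ` sends the positive matrix `w w*`, for the
antisymmetric vector `w = e_i ⊗ e_j - e_j ⊗ e_i`, to `-(E_ii + E_jj)`, which is not positive.
-/

open scoped ComplexOrder MatrixOrder Matrix.Norms.L2Operator
open Matrix Kronecker

namespace Matrix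

variable {l m n p α : Type*}

theorem kronecker_sub [NonUnitalNonAssocRing α] (A : Matrix l m α) (B₁ B₂ : Matrix n p α) :
    A ⊗ₖ (B₁ - B₂) = A ⊗ₖ B₁ - A ⊗ₖ B₂ := by
  ext; simp [mul_sub]

theorem sub_kronecker [NonUnitalNonAssocRing α] (A₁ A₂ : Matrix l m α) (B : Matrix n p α) :
    (A₁ - A₂) ⊗ₖ B = A₁ ⊗ₖ B - A₂ ⊗ₖ B := by
  ext; simp [sub_mul]

end Matrix

section MatrixUnits

variable {m : Type*} [DecidableEq m]

/-- The orthogonal projection onto the line spanned by `e_i + c e_j` (when `i ≠ j`, `|c| = 1`). -/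
noncomputable def lineProj (i j : m) (c : ℂ) : Matrix m m ℂ :=
  (2 : ℂ)⁻¹ • (single i i 1 + star c • single i j 1 + c • single j i 1 + single j j 1)

theorem isStarProjection_lineProj [Fintype m] {i j : m} (hij : i ≠ j) {c : ℂ}
    (hc : star c * c = 1) : IsStarProjection (lineProj i j c) where
  isIdempotentElem := by
    simp only [IsIdempotentElem, lineProj, Matrix.add_mul, Matrix.mul_add, Matrix.smul_mul,
      Matrix.mul_smul, single_mul_single_same, single_mul_single_of_ne _ _ _ _ hij,
      single_mul_single_of_ne _ _ _ _ hij.symm, smul_smul, mul_one, smul_zero, add_zero,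
      zero_add, smul_add]
    linear_combination (norm := module)
      hc • ((4 : ℂ)⁻¹ • (single i i 1 + single j j 1 : Matrix m m ℂ))
  isSelfAdjoint := by
    simp [IsSelfAdjoint, lineProj, star_add, star_eq_conjTranspose, conjTranspose_single]
    abel

theorem lineProj_mul_lineProj_neg [Fintype m] {i j : m} (hij : i ≠ j) {c : ℂ}
    (hc : star c * c = 1) : lineProj i j c * lineProj i j (-c) = 0 := by
  simp only [lineProj, Matrix.add_mul, Matrix.mul_add, Matrix.smul_mul, Matrix.mul_smul,
    single_mul_single_same, single_mul_single_of_ne _ _ _ _ hij,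
    single_mul_single_of_ne _ _ _ _ hij.symm, smul_smul, mul_one, smul_zero, add_zero, zero_add,
    smul_add, star_neg]
  linear_combination (norm := module)
    hc • ((-(4 : ℂ)⁻¹) • (single i i 1 + single j j 1 : Matrix m m ℂ))

theorem lineProj_sub_lineProj_neg (i j : m) (c : ℂ) :
    lineProj i j c - lineProj i j (-c) = star c • single i j 1 + c • single j i 1 := by
  simp only [lineProj, star_neg]
  module

theorem lineProj_add_lineProj_neg (i j : m) (c : ℂ) :
    lineProj i j c + lineProj i j (-c) = single i i 1 + single j j 1 := by
  simp only [lineProj, star_neg]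
  module

theorem isStarProjection_single_self [Fintype m] (i : m) :
    IsStarProjection (single i i (1 : ℂ)) where
  isIdempotentElem := by simp [IsIdempotentElem, single_mul_single_same]
  isSelfAdjoint := by simp [IsSelfAdjoint, star_eq_conjTranspose, conjTranspose_single]

theorem posSemidef_antisymmetric_tensor [Fintype m] (i j : m) :
    (single i i (1 : ℂ) ⊗ₖ single j j 1 + single j j 1 ⊗ₖ single i i 1
      - (single i j 1 ⊗ₖ single j i 1 + single j i 1 ⊗ₖ single i j 1)).PosSemidef := by
  have hw := posSemidef_vecMulVec_self_star (Pi.single (i, j) 1 - Pi.single (j, i) 1 : m × m → ℂ)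
  convert hw using 1
  simp only [single_kronecker_single, mul_one, star_sub, Pi.star_single, star_one, vecMulVec_sub,
    sub_vecMulVec, ← single_eq_single_vecMulVec_single]
  abel

end MatrixUnits

structure IsPositiveWithIdentityMarginals {m : Type*} [Fintype m] [DecidableEq m]
    (μ : Matrix (m × m) (m × m) ℂ →ₗ[ℂ] Matrix m m ℂ) : Prop where
  posSemidef : ∀ M, M.PosSemidef → (μ M).PosSemidef
  map_one_kronecker : ∀ a, μ (1 ⊗ₖ a) = a
  map_kronecker_one : ∀ a, μ (a ⊗ₖ 1) = a

namespace IsPositiveWithIdentityMarginals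

variable {m : Type*} [Fintype m] [DecidableEq m]
  {μ : Matrix (m × m) (m × m) ℂ →ₗ[ℂ] Matrix m m ℂ}

theorem map_kronecker_nonneg (hμ : IsPositiveWithIdentityMarginals μ) {e f : Matrix m m ℂ}
    (he : 0 ≤ e) (hf : 0 ≤ f) : 0 ≤ μ (e ⊗ₖ f) :=
  (hμ.posSemidef _ (he.posSemidef.kronecker hf.posSemidef)).nonneg

theorem map_kronecker_le_left (hμ : IsPositiveWithIdentityMarginals μ) {e f : Matrix m m ℂ}
    (he : 0 ≤ e) (hf : f ≤ 1) : μ (e ⊗ₖ f) ≤ e := by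
  have := hμ.map_kronecker_nonneg he (sub_nonneg.mpr hf)
  rwa [kronecker_sub, map_sub, hμ.map_kronecker_one, sub_nonneg] at this

theorem map_kronecker_le_right (hμ : IsPositiveWithIdentityMarginals μ) {e f : Matrix m m ℂ}
    (he : e ≤ 1) (hf : 0 ≤ f) : μ (e ⊗ₖ f) ≤ f := by
  have := hμ.map_kronecker_nonneg (sub_nonneg.mpr he) hf
  rwa [sub_kronecker, map_sub, hμ.map_one_kronecker, sub_nonneg] at this

theorem map_kronecker_eq_zero_of_mul_eq_zero (hμ : IsPositiveWithIdentityMarginals μ)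
    {P Q : Matrix m m ℂ} (hP : IsStarProjection P) (hQ : IsStarProjection Q) (hPQ : P * Q = 0) :
    μ (P ⊗ₖ Q) = 0 := by
  have hM := hμ.map_kronecker_nonneg hP.nonneg hQ.nonneg
  have hPM := (hP.mul_right_and_mul_left_of_nonneg_of_le hM
    (hμ.map_kronecker_le_left hP.nonneg hQ.le_one)).2
  have hQM := (hQ.mul_right_and_mul_left_of_nonneg_of_le hM
    (hμ.map_kronecker_le_right hP.le_one hQ.nonneg)).2
  rw [← hPM, ← hQM, ← mul_assoc, hPQ, zero_mul]

theorem map_kronecker_self (hμ : IsPositiveWithIdentityMarginals μ) {P : Matrix m m ℂ}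
    (hP : IsStarProjection P) : μ (P ⊗ₖ P) = P := by
  have := hμ.map_kronecker_eq_zero_of_mul_eq_zero hP hP.one_sub hP.mul_one_sub_self
  rwa [kronecker_sub, map_sub, hμ.map_kronecker_one, sub_eq_zero, eq_comm] at this

theorem map_kronecker_sub_self (hμ : IsPositiveWithIdentityMarginals μ) {P Q : Matrix m m ℂ}
    (hP : IsStarProjection P) (hQ : IsStarProjection Q) (hPQ : P * Q = 0) :
    μ ((P - Q) ⊗ₖ (P - Q)) = P + Q := by
  have hQP : Q * P = 0 := by
    simpa [hP.isSelfAdjoint.star_eq, hQ.isSelfAdjoint.star_eq] using congr(star $hPQ)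
  rw [sub_kronecker, kronecker_sub, kronecker_sub, map_sub, map_sub, map_sub,
    hμ.map_kronecker_self hP, hμ.map_kronecker_self hQ,
    hμ.map_kronecker_eq_zero_of_mul_eq_zero hP hQ hPQ,
    hμ.map_kronecker_eq_zero_of_mul_eq_zero hQ hP hQP]
  abel

theorem map_offDiag_kronecker_self (hμ : IsPositiveWithIdentityMarginals μ) {i j : m}
    (hij : i ≠ j) {c : ℂ} (hc : star c * c = 1) :
    μ ((star c • single i j 1 + c • single j i 1) ⊗ₖ (star c • single i j 1 + c • single j i 1))
      = single i i 1 + single j j 1 := by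
  have hc' : star (-c) * -c = 1 := by rwa [star_neg, neg_mul_neg]
  rw [← lineProj_sub_lineProj_neg, ← lineProj_add_lineProj_neg,
    hμ.map_kronecker_sub_self (isStarProjection_lineProj hij hc)
      (isStarProjection_lineProj hij hc') (lineProj_mul_lineProj_neg hij hc)]

theorem map_swap_kronecker (hμ : IsPositiveWithIdentityMarginals μ) {i j : m} (hij : i ≠ j) :
    μ (single i j 1 ⊗ₖ single j i 1 + single j i 1 ⊗ₖ single i j 1)
      = single i i 1 + single j j 1 := by
  have h₁ := hμ.map_offDiag_kronecker_self hij (c := 1) (by simp)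
  have h₂ := hμ.map_offDiag_kronecker_self hij (c := Complex.I) (by simp)
  simp only [add_kronecker, kronecker_add, smul_kronecker, kronecker_smul, map_add, map_smul,
    smul_add, smul_smul, star_one, mul_one, Complex.star_def, Complex.conj_I, neg_mul, mul_neg,
    neg_neg, Complex.I_mul_I] at h₁ h₂
  rw [map_add]
  linear_combination (norm := module) (2 : ℂ)⁻¹ • (h₁ + h₂)

theorem subsingleton (hμ : IsPositiveWithIdentityMarginals μ) : Subsingleton m := by
  refine ⟨fun i j => by_contra fun (hij : i ≠ j) => ?_⟩
  have hW := hμ.posSemidef _ (posSemidef_antisymmetric_tensor i j)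
  rw [map_sub, map_add, hμ.map_swap_kronecker hij,
    hμ.map_kronecker_eq_zero_of_mul_eq_zero (isStarProjection_single_self i)
      (isStarProjection_single_self j) (single_mul_single_of_ne _ _ _ _ hij _),
    hμ.map_kronecker_eq_zero_of_mul_eq_zero (isStarProjection_single_self j)
      (isStarProjection_single_self i) (single_mul_single_of_ne _ _ _ _ hij.symm _)] at hW
  have := hW.diag_nonneg (i := i)
  norm_num [hij.symm] at this

end IsPositiveWithIdentityMarginals

/-- For `n ≥ 2`, the matrix algebra `Mₙ(ℂ)` admits no duplicator, identifying
`Mₙ(ℂ) ⊗ Mₙ(ℂ)` with matrices indexed by `Fin n × Fin n` via the Kronecker product. -/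
theorem matrix_algebra_has_no_duplicator (n : ℕ) (hn : 2 ≤ n) :
    ¬ ∃ μ : Matrix (Fin n × Fin n) (Fin n × Fin n) ℂ →ₗ[ℂ] Matrix (Fin n) (Fin n) ℂ,
      (∀ M, M.PosSemidef → (μ M).PosSemidef) ∧
      μ ((1 : Matrix (Fin n) (Fin n) ℂ) ⊗ₖ (1 : Matrix (Fin n) (Fin n) ℂ)) = 1 ∧
      (∀ a : Matrix (Fin n) (Fin n) ℂ, μ ((1 : Matrix (Fin n) (Fin n) ℂ) ⊗ₖ a) = a ∧
        μ (a ⊗ₖ (1 : Matrix (Fin n) (Fin n) ℂ)) = a) ∧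
      ∀ a b c : Matrix (Fin n) (Fin n) ℂ,
        μ (a ⊗ₖ μ (b ⊗ₖ c)) = μ ((μ (a ⊗ₖ b)) ⊗ₖ c) := by
  rintro ⟨μ, hpos, -, hmarg, -⟩
  have hμ : IsPositiveWithIdentityMarginals μ :=
    ⟨hpos, fun a => (hmarg a).1, fun a => (hmarg a).2⟩
  exact not_subsingleton_iff_nontrivial.mpr (Fin.nontrivial_iff_two_le.mpr hn) hμ.subsingleton
end
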